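/- arXiv:1106.1243 — 2 statements merged into one kernel-verified Lean document; each statement's English description precedes it below -/
import Mathlib

section
/- Every P-transitive graph is 3-transitive: if G = (V, R) with coloring P : V → Bool is P-transitive, then whenever there is a path of length 4 from x to y, there is a path of length at most 3 from x to y. -/
def PathLen {V : Type*} (R : V → V → Prop) : ℕ → V → V → Prop
  | 0, x, y => x = y
  | n+1, x, y => ∃ z, R x z ∧ PathLen R n z y

def Reaches {V : Type*} (R : V → V → Prop) (x y : V) : Prop :=
  ∃ n, 1 ≤ n ∧ PathLen R n x y

def PTrans {V : Type*} (P : V → Bool) (R : V → V → Prop) : Prop :=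
  ∀ x y, P x = P y → Reaches R x y → R x y

def PTC {V : Type*} (P : V → Bool) (R : V → V → Prop) (x y : V) : Prop :=
  R x y ∨ (P x = P y ∧ Reaches R x y)

theorem Bool.eq_or_eq_or_eq (a b c : Bool) : a = b ∨ b = c ∨ a = c := by
  cases a <;> cases b <;> cases c <;> decide

section

variable {V : Type*} {R : V → V → Prop}

theorem pathLen_one {x y : V} : PathLen R 1 x y ↔ R x y := by
  simp [PathLen]

theorem pathLen_add {m n : ℕ} {x z : V} :
    PathLen R (m + n) x z ↔ ∃ y, PathLen R m x y ∧ PathLen R n y z := by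
  induction m generalizing x with
  | zero => simp [PathLen]
  | succ m ih => simp only [Nat.succ_add, PathLen, ih]; grind

theorem PTrans.rel_of_pathLen {P : V → Bool} (h : PTrans P R) {n : ℕ} {x y : V}
    (hn : 1 ≤ n) (hxy : P x = P y) (hp : PathLen R n x y) : R x y :=
  h x y hxy ⟨n, hn, hp⟩

end

-- Two of the three colours seen at positions 0, 2 and 4 of the path agree; shortcutting
-- the corresponding subpath by a single edge shortens the path to length 3 or 1.
theorem ptransitive_implies_three_transitive {V : Type*} (R : V → V → Prop) (P : V → Bool)
    (h : PTrans P R) :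
    ∀ x y : V, PathLen R 4 x y → ∃ m, 1 ≤ m ∧ m ≤ 3 ∧ PathLen R m x y := by
  intro x y hp
  obtain ⟨b, hxb, hby⟩ := (pathLen_add (m := 2) (n := 2)).1 hp
  obtain hx | hy | hxy := Bool.eq_or_eq_or_eq (P x) (P b) (P y)
  · have hxb' := pathLen_one.2 (h.rel_of_pathLen (by norm_num) hx hxb)
    exact ⟨1 + 2, by norm_num, le_rfl, pathLen_add.2 ⟨b, hxb', hby⟩⟩
  · have hby' := pathLen_one.2 (h.rel_of_pathLen (by norm_num) hy hby)
    exact ⟨2 + 1, by norm_num, le_rfl, pathLen_add.2 ⟨b, hxb, hby'⟩⟩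
  · exact ⟨1, le_rfl, by norm_num, pathLen_one.2 (h.rel_of_pathLen (by norm_num) hxy hp)⟩
end

section
/- The reduction graph construction preserves and reflects satisfaction for relativized modalities: let G = (V, R) be a graph and G' = (V × Bool, R') where R' (v,b) (w,c) holds iff b ≠ c and R v w, with coloring P(v,b) = b. Then for every vertex v and Boolean b, and every modal formula φ, v satisfies φ in G if and only if (v, b) satisfies φ' in G', where φ' is obtained from φ by replacing each diamond ◇ψ with ◇_{PP̄}ψ ∨ ◇_{P̄P}ψ (diamond restricted to color-alternating edges) and dually for boxes. -/
/-- Modal formulas over a set `A` of atoms (not mentioning the color `P`). -/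
inductive MF (A : Type*) where
  | atom : A → MF A
  | natom : A → MF A
  | and : MF A → MF A → MF A
  | or : MF A → MF A → MF A
  | dia : MF A → MF A
  | box : MF A → MF A

/-- Satisfaction in the original graph `G = (V, R)` with valuation `val`. -/
def Sat {A V : Type*} (R : V → V → Prop) (val : A → V → Prop) : MF A → V → Prop
  | .atom a, v => val a v
  | .natom a, v => ¬ val a v
  | .and φ ψ, v => Sat R val φ v ∧ Sat R val ψ v
  | .or φ ψ, v => Sat R val φ v ∨ Sat R val ψ v
  | .dia φ, v => ∃ w, R v w ∧ Sat R val φ w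
  | .box φ, v => ∀ w, R v w → Sat R val φ w

/-- The doubled graph `G' = (V × Bool, R')`: edges only between opposite colors. -/
def RDouble {V : Type*} (R : V → V → Prop) (x y : V × Bool) : Prop :=
  x.2 ≠ y.2 ∧ R x.1 y.1

/-- Satisfaction of the translated formula `φ'` in `G'`, where each diamond `◇ψ` is
replaced by `◇_{PP̄}ψ ∨ ◇_{P̄P}ψ` and each box `□ψ` by `[PP̄]ψ ∧ [P̄P]ψ`; the coloring
is `P (v, b) = b`. -/
def SatTr {A V : Type*} (R : V → V → Prop) (val : A → V → Prop) :
    MF A → V × Bool → Prop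
  | .atom a, x => val a x.1
  | .natom a, x => ¬ val a x.1
  | .and φ ψ, x => SatTr R val φ x ∧ SatTr R val ψ x
  | .or φ ψ, x => SatTr R val φ x ∨ SatTr R val ψ x
  | .dia φ, x =>
      (x.2 = true ∧ ∃ y, RDouble R x y ∧ y.2 = false ∧ SatTr R val φ y) ∨
      (x.2 = false ∧ ∃ y, RDouble R x y ∧ y.2 = true ∧ SatTr R val φ y)
  | .box φ, x =>
      (x.2 = true → ∀ y, RDouble R x y → y.2 = false → SatTr R val φ y) ∧
      (x.2 = false → ∀ y, RDouble R x y → y.2 = true → SatTr R val φ y)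

/-! The successors of `(v, b)` in `G'` are exactly the `(w, !b)` with `R v w`. Since the color
of a successor is thus forced, the relativized modalities of `φ'` collapse to the plain
modalities of `G'`, which mirror those of `G` one layer down; induction on `φ` finishes. -/

section Doubling

variable {A V : Type*} (R : V → V → Prop) (val : A → V → Prop)

theorem rDouble_mk_iff {v w : V} {b c : Bool} : RDouble R (v, b) (w, c) ↔ c = !b ∧ R v w := by
  cases b <;> cases c <;> simp [RDouble]

theorem exists_rDouble_mk_iff (p : V × Bool → Prop) (v : V) (b : Bool) :
    (∃ y, RDouble R (v, b) y ∧ p y) ↔ ∃ w, R v w ∧ p (w, !b) := by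
  cases b <;> simp [Prod.exists, rDouble_mk_iff]

theorem forall_rDouble_mk_iff (p : V × Bool → Prop) (v : V) (b : Bool) :
    (∀ y, RDouble R (v, b) y → p y) ↔ ∀ w, R v w → p (w, !b) := by
  cases b <;> simp [Prod.forall, rDouble_mk_iff]

/-- Every edge of `G'` alternates colors, so at each vertex exactly one of the two
relativized diamonds is the live one. -/
theorem satTr_dia_iff (φ : MF A) (x : V × Bool) :
    SatTr R val (.dia φ) x ↔ ∃ y, RDouble R x y ∧ SatTr R val φ y := by
  obtain ⟨v, b⟩ := x
  cases b <;> simp [SatTr, Prod.exists, rDouble_mk_iff]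

theorem satTr_box_iff (φ : MF A) (x : V × Bool) :
    SatTr R val (.box φ) x ↔ ∀ y, RDouble R x y → SatTr R val φ y := by
  obtain ⟨v, b⟩ := x
  cases b <;> simp [SatTr, Prod.forall, rDouble_mk_iff]

end Doubling

theorem reduction_preserves_satisfaction {A V : Type*} (R : V → V → Prop)
    (val : A → V → Prop) :
    ∀ (φ : MF A) (v : V) (b : Bool), Sat R val φ v ↔ SatTr R val φ (v, b) := by
  intro φ
  induction φ with
  | atom a | natom a => exact fun _ _ => Iff.rfl
  | and φ ψ ihφ ihψ => exact fun v b => and_congr (ihφ v b) (ihψ v b)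
  | or φ ψ ihφ ihψ => exact fun v b => or_congr (ihφ v b) (ihψ v b)
  | dia φ ih =>
    intro v b
    rw [satTr_dia_iff, exists_rDouble_mk_iff]
    exact exists_congr fun w => and_congr_right' (ih w !b)
  | box φ ih =>
    intro v b
    rw [satTr_box_iff, forall_rDouble_mk_iff]
    exact forall_congr' fun w => imp_congr_right fun _ => ih w !b
end
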